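/- Let ν be a probability measure on ℂ, δ > 0, τ ≥ 0, σ = 0, and set ε = ν({x : x ≠ 0}). Then the slope of the noiseless MSE map at zero exists and equals lim_{m → 0⁺} Ψ(m)/m = ( (1−ε)·2χ₂(τ) + ε·(1+τ²) ) / δ; in particular this slope depends on ν only through ε and not on the distribution of the non-zero values. -/

import Mathlib

/-!
With `w` a standard complex Gaussian, `r(μ,τ) = E‖η(μ + w; τ) − μ‖²`. For `σ = 0`,
`Ψ(m)/m = δ⁻¹ ∫ r(|x|/√(m/δ), τ) dν(x)`, and as `m → 0⁺` the amplitude `|x|/√(m/δ)` is `0` on the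
atom of `ν` at `0` and tends to `∞` elsewhere. At amplitude `0`, `‖η(w)‖ = (‖w‖ − τ)₊`, and polar
coordinates give `r(0,τ) = 2χ₂(τ)`. At large amplitude `η(μ + w) − μ → w − τ`, so by dominated
convergence `r(μ,τ) → E‖w − τ‖² = 1 + τ²`. Since `0 ≤ r ≤ 2(1 + τ²)`, dominated convergence over
`ν` concludes.
-/

open MeasureTheory Filter

/-- Complex soft thresholding: `η(x;τ) = (1 - τ/|x|)·x` if `|x| > τ`, else `0`. -/
noncomputable def softThresh (x : ℂ) (τ : ℝ) : ℂ :=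
  if τ < ‖x‖ then ((1 - τ / ‖x‖ : ℝ) : ℂ) * x else 0

/-- Risk of complex soft thresholding at amplitude `μ`:
`r(μ,τ) = ∫_{ℝ²} |η(μ + z₁ + i z₂; τ) − μ|² (1/π) e^{−(z₁²+z₂²)} dz₁ dz₂`. -/
noncomputable def softRisk (μ τ : ℝ) : ℝ :=
  ∫ z : ℝ × ℝ,
    ‖softThresh ((μ : ℂ) + (z.1 : ℂ) + Complex.I * (z.2 : ℂ)) τ - (μ : ℂ)‖ ^ 2 *
      ((1 / Real.pi) * Real.exp (-(z.1 ^ 2 + z.2 ^ 2)))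

/-- `χ₂(τ) = ∫_τ^∞ ω (ω − τ)² e^{−ω²} dω`. -/
noncomputable def chi2 (τ : ℝ) : ℝ :=
  ∫ ω in Set.Ioi τ, ω * (ω - τ) ^ 2 * Real.exp (-ω ^ 2)

/-- The MSE map `Ψ(m) = (σ² + m/δ) ∫ r(|x|/√(σ² + m/δ), τ) dν(x)`
(with the convention `Ψ(0) = 0` when `σ = 0`, via division by zero). -/
noncomputable def mseMap (ν : Measure ℂ) (δ σ τ m : ℝ) : ℝ :=
  (σ ^ 2 + m / δ) *
    ∫ x, softRisk (‖x‖ / Real.sqrt (σ ^ 2 + m / δ)) τ ∂ν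

open Real Set Topology

noncomputable def complexGaussianPDF (w : ℂ) : ℝ :=
  1 / π * exp (-‖w‖ ^ 2)

lemma integral_fun_norm_complex (f : ℝ → ℝ) :
    ∫ w : ℂ, f ‖w‖ = 2 * π * ∫ y in Ioi (0 : ℝ), y * f y := by
  rw [integral_fun_norm_addHaar volume f, Complex.finrank_real_complex, measureReal_def,
    Complex.volume_ball]
  simp [smul_eq_mul, mul_assoc]

lemma integrable_fun_norm_complex {f : ℝ → ℝ} :
    Integrable (fun w : ℂ => f ‖w‖) ↔ IntegrableOn (fun y => y * f y) (Ioi 0) := by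
  rw [integrable_fun_norm_addHaar volume, Complex.finrank_real_complex]
  simp

lemma mul_rpow_mul_exp_neg_sq {q y : ℝ} (hy : 0 < y) :
    y * (y ^ q * (1 / π * exp (-y ^ 2))) = 1 / π * (y ^ (q + 1) * exp (-y ^ (2 : ℝ))) := by
  rw [rpow_add_one hy.ne', rpow_two]
  ring

lemma integrable_norm_rpow_mul_complexGaussianPDF {q : ℝ} (hq : -2 < q) :
    Integrable (fun w : ℂ => ‖w‖ ^ q * complexGaussianPDF w) := by
  have h : IntegrableOn (fun y : ℝ => 1 / π * (y ^ (q + 1) * exp (-y ^ (2 : ℝ)))) (Ioi 0) :=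
    (integrableOn_rpow_mul_exp_neg_rpow (by linarith) two_pos).const_mul _
  exact integrable_fun_norm_complex.mpr
    (h.congr_fun (fun y hy => (mul_rpow_mul_exp_neg_sq hy).symm) measurableSet_Ioi)

lemma integral_norm_rpow_mul_complexGaussianPDF {q : ℝ} (hq : -2 < q) :
    ∫ w : ℂ, ‖w‖ ^ q * complexGaussianPDF w = Gamma (q / 2 + 1) := by
  unfold complexGaussianPDF
  rw [integral_fun_norm_complex (fun y => y ^ q * (1 / π * exp (-y ^ 2))),
    setIntegral_congr_fun measurableSet_Ioi (fun y hy => mul_rpow_mul_exp_neg_sq hy),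
    integral_const_mul, integral_rpow_mul_exp_neg_rpow two_pos (by linarith)]
  field_simp
  ring_nf

lemma complexGaussianPDF_nonneg (w : ℂ) : 0 ≤ complexGaussianPDF w := by
  unfold complexGaussianPDF; positivity

@[fun_prop]
lemma continuous_complexGaussianPDF : Continuous complexGaussianPDF := by
  unfold complexGaussianPDF; fun_prop

lemma complexGaussianPDF_neg (w : ℂ) : complexGaussianPDF (-w) = complexGaussianPDF w := by
  simp [complexGaussianPDF]

lemma integrable_complexGaussianPDF : Integrable complexGaussianPDF := by
  simpa using integrable_norm_rpow_mul_complexGaussianPDF (q := 0) (by norm_num)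

lemma integral_complexGaussianPDF : ∫ w, complexGaussianPDF w = 1 := by
  simpa using integral_norm_rpow_mul_complexGaussianPDF (q := 0) (by norm_num)

lemma integrable_sq_norm_mul_complexGaussianPDF :
    Integrable (fun w : ℂ => ‖w‖ ^ 2 * complexGaussianPDF w) := by
  simpa using integrable_norm_rpow_mul_complexGaussianPDF (q := 2) (by norm_num)

lemma integral_sq_norm_mul_complexGaussianPDF :
    ∫ w : ℂ, ‖w‖ ^ 2 * complexGaussianPDF w = 1 := by
  simpa [one_add_one_eq_two, Gamma_two] using
    integral_norm_rpow_mul_complexGaussianPDF (q := 2) (by norm_num)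

lemma integrable_sq_norm_add_mul_complexGaussianPDF (a : ℝ) :
    Integrable (fun w : ℂ => (‖w‖ ^ 2 + a) * complexGaussianPDF w) := by
  refine (integrable_sq_norm_mul_complexGaussianPDF.add
    (integrable_complexGaussianPDF.const_mul a)).congr (ae_of_all _ fun w => ?_)
  simp only [Pi.add_apply]
  ring

lemma integral_sq_norm_add_mul_complexGaussianPDF (a : ℝ) :
    ∫ w : ℂ, (‖w‖ ^ 2 + a) * complexGaussianPDF w = 1 + a := by
  simp_rw [add_mul]
  rw [integral_add integrable_sq_norm_mul_complexGaussianPDF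
      (integrable_complexGaussianPDF.const_mul a), integral_const_mul,
    integral_sq_norm_mul_complexGaussianPDF, integral_complexGaussianPDF, mul_one]

lemma sq_norm_sub_le (w c : ℂ) : ‖w - c‖ ^ 2 ≤ 2 * (‖w‖ ^ 2 + ‖c‖ ^ 2) := by
  nlinarith [norm_sub_le w c, norm_nonneg (w - c), sq_nonneg (‖w‖ - ‖c‖)]

lemma integrable_sq_norm_sub_mul_complexGaussianPDF (c : ℂ) :
    Integrable (fun w : ℂ => ‖w - c‖ ^ 2 * complexGaussianPDF w) := by
  refine ((integrable_sq_norm_add_mul_complexGaussianPDF (‖c‖ ^ 2)).const_mul 2).mono'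
    (by fun_prop) (ae_of_all _ fun w => ?_)
  rw [norm_of_nonneg (by have := complexGaussianPDF_nonneg w; positivity), ← mul_assoc]
  exact mul_le_mul_of_nonneg_right (sq_norm_sub_le w c) (complexGaussianPDF_nonneg w)

lemma integral_sq_norm_sub_mul_complexGaussianPDF (c : ℂ) :
    ∫ w : ℂ, ‖w - c‖ ^ 2 * complexGaussianPDF w = 1 + ‖c‖ ^ 2 := by
  -- `w ↦ -w` preserves the density, and the parallelogram law averages `‖w + c‖²` and `‖w - c‖²`.
  have hsymm : ∫ w : ℂ, ‖w + c‖ ^ 2 * complexGaussianPDF w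
      = ∫ w : ℂ, ‖w - c‖ ^ 2 * complexGaussianPDF w := by
    rw [← integral_neg_eq_self]
    congr 1 with w
    rw [complexGaussianPDF_neg, ← norm_neg, neg_add', neg_neg]
  have hsum : ∫ w : ℂ, (‖w + c‖ ^ 2 + ‖w - c‖ ^ 2) * complexGaussianPDF w
      = 2 * (1 + ‖c‖ ^ 2) := by
    rw [← integral_sq_norm_add_mul_complexGaussianPDF, ← integral_const_mul]
    congr 1 with w
    rw [parallelogram_law_with_norm ℝ w c]
    ring
  simp_rw [add_mul] at hsum
  rw [integral_add ?_ (integrable_sq_norm_sub_mul_complexGaussianPDF c), hsymm] at hsum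
  · linarith
  · refine (integrable_sq_norm_sub_mul_complexGaussianPDF (-c)).congr (ae_of_all _ fun w => ?_)
    simp [sub_neg_eq_add]

lemma softThresh_of_lt {x : ℂ} {τ : ℝ} (h : τ < ‖x‖) :
    softThresh x τ = x - τ * (x / ‖x‖) := by
  rw [softThresh, if_pos h]
  rcases eq_or_ne x 0 with rfl | hx
  · simp
  · have : (‖x‖ : ℂ) ≠ 0 := by simpa using hx
    push_cast
    field_simp

lemma softThresh_of_le {x : ℂ} {τ : ℝ} (h : ‖x‖ ≤ τ) : softThresh x τ = 0 := by
  rw [softThresh, if_neg h.not_gt]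

lemma norm_softThresh_sub_self_le {τ : ℝ} (hτ : 0 ≤ τ) (x : ℂ) : ‖softThresh x τ - x‖ ≤ τ := by
  rcases lt_or_ge τ ‖x‖ with h | h
  · have hx : ‖x‖ ≠ 0 := (hτ.trans_lt h).ne'
    rw [softThresh_of_lt h, sub_sub_cancel_left, norm_neg, norm_mul, norm_div, Complex.norm_real,
      Complex.norm_real, norm_norm, div_self hx, mul_one, norm_of_nonneg hτ]
  · rwa [softThresh_of_le h, zero_sub, norm_neg]

lemma norm_softThresh {τ : ℝ} (hτ : 0 ≤ τ) (x : ℂ) : ‖softThresh x τ‖ = max (‖x‖ - τ) 0 := by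
  rcases lt_or_ge τ ‖x‖ with h | h
  · have hx : 0 < ‖x‖ := hτ.trans_lt h
    rw [softThresh, if_pos h, norm_mul, Complex.norm_real, norm_of_nonneg, max_eq_left]
    · field_simp
    · linarith
    · rw [sub_nonneg, div_le_one hx]; exact h.le
  · rw [softThresh_of_le h, norm_zero, max_eq_right (by linarith)]

@[fun_prop]
lemma measurable_softThresh (τ : ℝ) : Measurable (fun x : ℂ => softThresh x τ) := by
  unfold softThresh
  exact Measurable.ite (measurableSet_lt measurable_const measurable_norm) (by fun_prop)
    measurable_const

lemma tendsto_div_norm_add_atTop (w : ℂ) :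
    Tendsto (fun μ : ℝ => ((μ : ℂ) + w) / ‖(μ : ℂ) + w‖) atTop (𝓝 1) := by
  -- `u ↦ u / ‖u‖` is continuous at `1` and invariant under `u ↦ μ⁻¹ u`, which sends `μ + w` to
  -- `1 + μ⁻¹ w`.
  have hcont : ContinuousAt (fun u : ℂ => u / ‖u‖) 1 :=
    continuousAt_id.div (by fun_prop) (by simp)
  have hdir : Tendsto (fun u : ℂ => u / ‖u‖) (𝓝 1) (𝓝 1) := by simpa using hcont.tendsto
  have hlim : Tendsto (fun μ : ℝ => 1 + (μ : ℂ)⁻¹ * w) atTop (𝓝 1) := by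
    have : Tendsto (fun μ : ℝ => (μ : ℂ)⁻¹) atTop (𝓝 0) := by
      simpa [Function.comp_def] using
        (Complex.continuous_ofReal.tendsto 0).comp tendsto_inv_atTop_zero
    simpa using (this.mul_const w).const_add 1
  refine (hdir.comp hlim).congr' ?_
  filter_upwards [eventually_gt_atTop 0] with μ hμ
  have hμ' : (μ : ℂ) ≠ 0 := by exact_mod_cast hμ.ne'
  have hscale : 1 + (μ : ℂ)⁻¹ * w = ((μ⁻¹ : ℝ) : ℂ) * (μ + w) := by
    push_cast; field_simp
  simp only [Function.comp_apply, hscale, norm_mul, Complex.norm_real, norm_inv,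
    norm_of_nonneg hμ.le]
  push_cast
  field_simp

lemma tendsto_softThresh_add_sub_atTop (τ : ℝ) (w : ℂ) :
    Tendsto (fun μ : ℝ => softThresh (μ + w) τ - μ) atTop (𝓝 (w - τ)) := by
  have hlim := ((tendsto_div_norm_add_atTop w).const_mul (τ : ℂ)).const_sub w
  rw [mul_one] at hlim
  refine hlim.congr' ?_
  filter_upwards [eventually_gt_atTop (τ + ‖w‖), eventually_ge_atTop 0] with μ hμ hμ₀
  have hτ : τ < ‖(μ : ℂ) + w‖ := by
    have := norm_sub_norm_le (μ : ℂ) (-w)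
    rw [sub_neg_eq_add, norm_neg, Complex.norm_real, norm_of_nonneg hμ₀] at this
    linarith
  rw [softThresh_of_lt hτ]
  ring

lemma softRisk_eq_integral_complex (μ τ : ℝ) :
    softRisk μ τ = ∫ w : ℂ, ‖softThresh (μ + w) τ - μ‖ ^ 2 * complexGaussianPDF w := by
  rw [softRisk, ← Complex.volume_preserving_equiv_real_prod.integral_comp
    Complex.measurableEquivRealProd.measurableEmbedding]
  congr 1 with w
  have hnorm : w.re ^ 2 + w.im ^ 2 = ‖w‖ ^ 2 := by
    rw [Complex.sq_norm, Complex.normSq_apply]; ring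
  simp only [Complex.measurableEquivRealProd_apply]
  rw [add_assoc, mul_comm Complex.I, Complex.re_add_im, complexGaussianPDF, hnorm]

lemma sq_norm_softThresh_add_sub_le {τ : ℝ} (hτ : 0 ≤ τ) (μ w : ℂ) :
    ‖softThresh (μ + w) τ - μ‖ ^ 2 ≤ 2 * (‖w‖ ^ 2 + τ ^ 2) := by
  have hle : ‖softThresh (μ + w) τ - μ‖ ≤ τ + ‖w‖ :=
    calc ‖softThresh (μ + w) τ - μ‖
        ≤ ‖softThresh (μ + w) τ - (μ + w)‖ + ‖μ + w - μ‖ := norm_sub_le_norm_sub_add_norm_sub _ _ _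
      _ ≤ τ + ‖w‖ := by
        rw [add_sub_cancel_left]; exact add_le_add_left (norm_softThresh_sub_self_le hτ _) _
  nlinarith [norm_nonneg (softThresh (μ + w) τ - μ), sq_nonneg (τ - ‖w‖)]

lemma softRisk_integrand_le {τ : ℝ} (hτ : 0 ≤ τ) (μ : ℝ) (w : ℂ) :
    ‖softThresh (μ + w) τ - μ‖ ^ 2 * complexGaussianPDF w
      ≤ 2 * ((‖w‖ ^ 2 + τ ^ 2) * complexGaussianPDF w) := by
  rw [← mul_assoc]
  exact mul_le_mul_of_nonneg_right (sq_norm_softThresh_add_sub_le hτ μ w)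
    (complexGaussianPDF_nonneg w)

lemma softRisk_nonneg (μ τ : ℝ) : 0 ≤ softRisk μ τ :=
  integral_nonneg fun _ => by positivity

lemma softRisk_le {τ : ℝ} (hτ : 0 ≤ τ) (μ : ℝ) : softRisk μ τ ≤ 2 * (1 + τ ^ 2) := by
  rw [softRisk_eq_integral_complex, ← integral_sq_norm_add_mul_complexGaussianPDF,
    ← integral_const_mul]
  refine integral_mono_of_nonneg (ae_of_all _ fun w => ?_)
    ((integrable_sq_norm_add_mul_complexGaussianPDF _).const_mul 2)
    (ae_of_all _ (softRisk_integrand_le hτ μ))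
  have := complexGaussianPDF_nonneg w
  positivity

lemma abs_softRisk_le {τ : ℝ} (hτ : 0 ≤ τ) (μ : ℝ) : |softRisk μ τ| ≤ 2 * (1 + τ ^ 2) := by
  rw [abs_of_nonneg (softRisk_nonneg μ τ)]
  exact softRisk_le hτ μ

lemma measurable_softRisk (τ : ℝ) : Measurable (fun μ => softRisk μ τ) := by
  simp_rw [softRisk_eq_integral_complex]
  have hjoint : Measurable (fun p : ℝ × ℂ =>
      ‖softThresh (p.1 + p.2) τ - p.1‖ ^ 2 * complexGaussianPDF p.2) := by
    fun_prop
  exact hjoint.stronglyMeasurable.integral_prod_right'.measurable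

lemma softRisk_zero {τ : ℝ} (hτ : 0 ≤ τ) : softRisk 0 τ = 2 * chi2 τ := by
  let g : ℝ → ℝ := fun y => y * (y - τ) ^ 2 * exp (-y ^ 2)
  have hradial : ∀ y : ℝ, y * (max (y - τ) 0 ^ 2 * (1 / π * exp (-y ^ 2)))
      = 1 / π * (Ioi τ).indicator g y := by
    intro y
    rcases lt_or_ge τ y with h | h
    · rw [indicator_of_mem (show y ∈ Ioi τ from h), max_eq_left (by linarith)]; ring
    · rw [indicator_of_notMem (show y ∉ Ioi τ from not_lt.mpr h), max_eq_right (by linarith)]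
      ring
  calc softRisk 0 τ
      = ∫ w : ℂ, max (‖w‖ - τ) 0 ^ 2 * (1 / π * exp (-‖w‖ ^ 2)) := by
        simp [softRisk_eq_integral_complex, norm_softThresh hτ, complexGaussianPDF]
    _ = 2 * π * (1 / π * ∫ y in Ioi 0, (Ioi τ).indicator g y) := by
        rw [integral_fun_norm_complex (fun y => max (y - τ) 0 ^ 2 * (1 / π * exp (-y ^ 2)))]
        simp_rw [hradial]
        rw [integral_const_mul]
    _ = 2 * chi2 τ := by
        rw [setIntegral_indicator measurableSet_Ioi, Ioi_inter_Ioi, max_eq_right hτ]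
        field_simp
        rfl

lemma tendsto_softRisk_atTop {τ : ℝ} (hτ : 0 ≤ τ) :
    Tendsto (fun μ => softRisk μ τ) atTop (𝓝 (1 + τ ^ 2)) := by
  have hlim := integral_sq_norm_sub_mul_complexGaussianPDF (τ : ℂ)
  rw [Complex.norm_real, norm_eq_abs, sq_abs] at hlim
  simp_rw [softRisk_eq_integral_complex, ← hlim]
  refine tendsto_integral_filter_of_dominated_convergence _
    (Eventually.of_forall fun μ => (by fun_prop : Measurable _).aestronglyMeasurable)
    (Eventually.of_forall fun μ => ae_of_all _ fun w => ?_)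
    ((integrable_sq_norm_add_mul_complexGaussianPDF (τ ^ 2)).const_mul 2)
    (ae_of_all _ fun w => ?_)
  · rw [norm_of_nonneg (by have := complexGaussianPDF_nonneg w; positivity)]
    exact softRisk_integrand_le hτ μ w
  · exact (((continuous_norm.tendsto _).comp
      (tendsto_softThresh_add_sub_atTop τ w)).pow 2).mul_const _

lemma tendsto_integral_comp_norm_div_nhdsGT {E : Type*} [NormedAddCommGroup E] [MeasurableSpace E]
    [OpensMeasurableSpace E] (ν : Measure E) [IsFiniteMeasure ν] {r : ℝ → ℝ} (hr : Measurable r)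
    {C : ℝ} (hC : ∀ μ, |r μ| ≤ C) {ℓ : ℝ} (hℓ : Tendsto r atTop (𝓝 ℓ)) :
    Tendsto (fun s => ∫ x, r (‖x‖ / s) ∂ν) (𝓝[>] 0)
      (𝓝 (ν.real {0} * r 0 + ν.real {x | x ≠ 0} * ℓ)) := by
  have hne : MeasurableSet {x : E | x ≠ 0} := (measurableSet_singleton 0).compl
  let L : E → ℝ := ({0} : Set E).indicator (fun _ => r 0) + {x | x ≠ 0}.indicator (fun _ => ℓ)
  have hL : ∫ x, L x ∂ν = ν.real {0} * r 0 + ν.real {x | x ≠ 0} * ℓ := by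
    rw [integral_add' ((integrable_const _).indicator (measurableSet_singleton 0))
        ((integrable_const _).indicator hne), integral_indicator_const _ (measurableSet_singleton 0),
      integral_indicator_const _ hne, smul_eq_mul, smul_eq_mul]
  have hpointwise : ∀ x, Tendsto (fun s => r (‖x‖ / s)) (𝓝[>] 0) (𝓝 (L x)) := by
    intro x
    rcases eq_or_ne x 0 with rfl | hx
    · simp [L]
    · have hLx : L x = ℓ := by simp [L, hx]
      rw [hLx]
      exact hℓ.comp (tendsto_inv_nhdsGT_zero.const_mul_atTop (norm_pos_iff.mpr hx))
  rw [← hL]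
  exact tendsto_integral_filter_of_dominated_convergence (fun _ => C)
    (Eventually.of_forall fun s => (hr.comp (by fun_prop)).aestronglyMeasurable)
    (Eventually.of_forall fun s => ae_of_all _ fun x => hC _) (integrable_const C)
    (ae_of_all _ hpointwise)

lemma mseMap_zero_div (ν : Measure ℂ) {δ : ℝ} (hδ : δ ≠ 0) (τ : ℝ) {m : ℝ} (hm : m ≠ 0) :
    mseMap ν δ 0 τ m / m = (∫ x, softRisk (‖x‖ / √(m / δ)) τ ∂ν) / δ := by
  rw [mseMap, zero_pow two_ne_zero, zero_add]
  field_simp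

lemma tendsto_sqrt_div_nhdsGT_zero {δ : ℝ} (hδ : 0 < δ) :
    Tendsto (fun m : ℝ => √(m / δ)) (𝓝[>] 0) (𝓝[>] 0) := by
  refine tendsto_nhdsWithin_iff.mpr ⟨?_, ?_⟩
  · have hcont : Continuous (fun m : ℝ => √(m / δ)) := by fun_prop
    simpa using (hcont.tendsto' 0 0 (by simp)).mono_left nhdsWithin_le_nhds
  · filter_upwards [self_mem_nhdsWithin] with m hm using sqrt_pos.mpr (div_pos hm hδ)

/-- In the noiseless case `σ = 0`, with `ε = ν({x ≠ 0})`, the slope of the MSE map at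
zero exists and equals `((1−ε)·2χ₂(τ) + ε(1+τ²))/δ`; in particular it depends on `ν`
only through `ε` and not on the distribution of the non-zero values. -/
theorem mseMap_slope_at_zero (ν : Measure ℂ) (hν : IsProbabilityMeasure ν)
    (δ τ : ℝ) (hδ : 0 < δ) (hτ : 0 ≤ τ) :
    Tendsto (fun m : ℝ => mseMap ν δ 0 τ m / m) (nhdsWithin 0 (Set.Ioi 0))
      (nhds (((1 - (ν {x : ℂ | x ≠ 0}).toReal) * (2 * chi2 τ) +
                (ν {x : ℂ | x ≠ 0}).toReal * (1 + τ ^ 2)) / δ)) := by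
  have hzero : ν.real {0} = 1 - ν.real {x | x ≠ 0} := by
    rw [← probReal_compl_eq_one_sub (s := {x : ℂ | x ≠ 0}) (measurableSet_singleton 0).compl]
    congr 1
    ext; simp
  have hlim := (tendsto_integral_comp_norm_div_nhdsGT ν (measurable_softRisk τ)
    (abs_softRisk_le hτ) (tendsto_softRisk_atTop hτ)).comp (tendsto_sqrt_div_nhdsGT_zero hδ)
  rw [softRisk_zero hτ, hzero] at hlim
  refine (hlim.div_const δ).congr' ?_
  filter_upwards [self_mem_nhdsWithin] with m hm
  exact (mseMap_zero_div ν hδ.ne' τ (ne_of_gt hm)).symm
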